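/- arXiv:1109.5586 — 7 statements merged into one kernel-verified Lean document; each statement's English description precedes it below -/
import Mathlib

section
/- Let n ≥ 1 and let a : ℕ → ℝ and b : ℕ → ℝ. Define monic polynomials p : ℕ → ℝ[X] by p 0 = 1, p 1 = X − C(a 0), and p (k+1) = (X − C(a k))·p k − C((b k)²)·p (k−1) for k ≥ 1. Let J(n) be the n×n real symmetric tridiagonal Jacobi matrix with diagonal entries J k k = a k (0 ≤ k < n), off-diagonal entries J k (k+1) = J (k+1) k = b (k+1) (0 ≤ k < n−1), and all other entries 0. Then the characteristic polynomial of J(n) equals p n; consequently the n roots of p n are exactly the eigenvalues of the Jacobi matrix J(n). -/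
/-!
Expanding `det (X • 1 - J)` along its last row, and the one nontrivial minor along its last
column, shows that the characteristic polynomials of the leading principal submatrices of a
tridiagonal matrix satisfy the three-term recurrence; for a Jacobi matrix it is the recurrence
of the `p k`, with the same initial values.
-/

open Matrix Polynomial

namespace Matrix

variable {R : Type*} [CommRing R]

/-- Off-diagonal entries are indexed by the larger of their row and column index:
`e j` sits at `(j - 1, j)` and `f i` at `(i, i - 1)`. -/
def tridiagonal (d e f : ℕ → R) (n : ℕ) : Matrix (Fin n) (Fin n) R :=
  of fun i j =>
    if (i : ℕ) = j then d i
    else if (i : ℕ) + 1 = j then e j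
    else if (j : ℕ) + 1 = i then f i
    else 0

variable (d e f : ℕ → R)

@[simp]
theorem tridiagonal_submatrix_castSucc (n : ℕ) :
    (tridiagonal d e f (n + 1)).submatrix Fin.castSucc Fin.castSucc = tridiagonal d e f n := by
  ext i j
  simp [tridiagonal]

theorem tridiagonal_apply_of_add_one_lt {n : ℕ} {i j : Fin n}
    (h : (i : ℕ) + 1 < j ∨ (j : ℕ) + 1 < i) :
    tridiagonal d e f n i j = 0 := by
  simp only [tridiagonal, of_apply]
  rw [if_neg (by omega), if_neg (by omega), if_neg (by omega)]

theorem det_tridiagonal_submatrix_castSucc_succAbove (m : ℕ) :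
    ((tridiagonal d e f (m + 2)).submatrix Fin.castSucc (Fin.last m).castSucc.succAbove).det =
      e (m + 1) * (tridiagonal d e f m).det := by
  have hminor : (Fin.last m).castSucc.succAbove ∘ Fin.castSucc = Fin.castSucc ∘ Fin.castSucc :=
    funext fun j => Fin.succAbove_castSucc_of_lt _ _ (Fin.castSucc_lt_last j)
  rw [det_succ_column _ (Fin.last m), Fin.sum_univ_castSucc, Finset.sum_eq_zero fun i _ => by
      rw [submatrix_apply, Fin.succAbove_castSucc_self,
        tridiagonal_apply_of_add_one_lt d e f (Or.inl (by simp)), mul_zero, zero_mul],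
    zero_add, Fin.succAbove_last, submatrix_submatrix, hminor, ← submatrix_submatrix,
    tridiagonal_submatrix_castSucc, tridiagonal_submatrix_castSucc, Fin.val_last,
    Even.neg_one_pow ⟨m, rfl⟩, one_mul]
  simp [tridiagonal]

theorem det_tridiagonal_succ_succ (m : ℕ) :
    (tridiagonal d e f (m + 2)).det =
      d (m + 1) * (tridiagonal d e f (m + 1)).det -
        e (m + 1) * f (m + 1) * (tridiagonal d e f m).det := by
  have hsub : tridiagonal d e f (m + 2) (Fin.last (m + 1)) (Fin.last m).castSucc = f (m + 1) := by
    simp only [tridiagonal, of_apply, Fin.val_last, Fin.val_castSucc]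
    rw [if_neg (by omega), if_neg (by omega), if_true]
  have hdiag : tridiagonal d e f (m + 2) (Fin.last (m + 1)) (Fin.last (m + 1)) = d (m + 1) := by
    simp [tridiagonal]
  rw [det_succ_row _ (Fin.last (m + 1)), Fin.sum_univ_castSucc, Fin.sum_univ_castSucc,
    Finset.sum_eq_zero fun j _ => by
      rw [tridiagonal_apply_of_add_one_lt d e f (Or.inr (by simp)), mul_zero, zero_mul],
    zero_add, Fin.succAbove_last, tridiagonal_submatrix_castSucc,
    det_tridiagonal_submatrix_castSucc_succAbove, hsub, hdiag]
  simp only [Fin.val_castSucc, Fin.val_last]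
  rw [Odd.neg_one_pow ⟨m, by ring⟩, Even.neg_one_pow ⟨m + 1, rfl⟩]
  ring

theorem det_tridiagonal_eq_of_recurrence (q : ℕ → R) (h0 : q 0 = 1) (h1 : q 1 = d 0)
    (hrec : ∀ k, 1 ≤ k → q (k + 1) = d k * q k - e k * f k * q (k - 1)) :
    ∀ n, (tridiagonal d e f n).det = q n
  | 0 => by rw [det_fin_zero, h0]
  | 1 => by rw [det_fin_one, h1]; simp [tridiagonal]
  | m + 2 => by
    rw [det_tridiagonal_succ_succ, det_tridiagonal_eq_of_recurrence q h0 h1 hrec m,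
      det_tridiagonal_eq_of_recurrence q h0 h1 hrec (m + 1)]
    exact (hrec (m + 1) (Nat.le_add_left 1 m)).symm

theorem charmatrix_tridiagonal (n : ℕ) :
    charmatrix (tridiagonal d e f n) =
      tridiagonal (fun k => X - C (d k)) (fun k => -C (e k)) (fun k => -C (f k)) n := by
  ext i j : 1
  by_cases hij : i = j
  · subst hij
    simp [tridiagonal]
  · have hij' : (i : ℕ) ≠ j := Fin.val_ne_of_ne hij
    rw [charmatrix_apply_ne _ _ _ hij]
    simp only [tridiagonal, of_apply, if_neg hij']
    split_ifs <;> simp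

end Matrix

theorem charpoly_jacobi_eq_orthopoly_general
    (n : ℕ) (a b : ℕ → ℝ) (p : ℕ → Polynomial ℝ)
    (hp0 : p 0 = 1) (hp1 : p 1 = X - C (a 0))
    (hprec : ∀ k, 1 ≤ k →
      p (k + 1) = (X - C (a k)) * p k - C ((b k) ^ 2) * p (k - 1))
    (J : Matrix (Fin n) (Fin n) ℝ)
    (hJ : ∀ i j : Fin n, J i j =
      if (i : ℕ) = (j : ℕ) then a i
      else if (i : ℕ) + 1 = (j : ℕ) then b j
      else if (j : ℕ) + 1 = (i : ℕ) then b i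
      else 0) :
    J.charpoly = p n := by
  have hJ' : J = tridiagonal a b b n := Matrix.ext hJ
  rw [charpoly, hJ', charmatrix_tridiagonal]
  refine det_tridiagonal_eq_of_recurrence _ _ _ p hp0 hp1 (fun k hk => ?_) n
  rw [hprec k hk, C_pow]
  ring

theorem charpoly_jacobi_eq_orthopoly
    (n : ℕ) (hn : 1 ≤ n) (a b : ℕ → ℝ) (p : ℕ → Polynomial ℝ)
    (hp0 : p 0 = 1) (hp1 : p 1 = X - C (a 0))
    (hprec : ∀ k, 1 ≤ k →
      p (k + 1) = (X - C (a k)) * p k - C ((b k) ^ 2) * p (k - 1))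
    (J : Matrix (Fin n) (Fin n) ℝ)
    (hJ : ∀ i j : Fin n, J i j =
      if (i : ℕ) = (j : ℕ) then a i
      else if (i : ℕ) + 1 = (j : ℕ) then b j
      else if (j : ℕ) + 1 = (i : ℕ) then b i
      else 0) :
    J.charpoly = p n :=
  charpoly_jacobi_eq_orthopoly_general n a b p hp0 hp1 hprec J hJ
end

section
/- Let n ≥ 1, let α : ℕ → ℝ and β : ℕ → ℝ, and let P : ℕ → ℝ[X] be polynomials with P 0 a nonzero constant polynomial, satisfying the three-term recurrence X·(P 0) = C(α 0)·P 0 + C(β 1)·P 1 and X·(P k) = C(β k)·P (k−1) + C(α k)·P k + C(β (k+1))·P (k+1) for all k ≥ 1. Let J(n) be the n×n real symmetric tridiagonal matrix with J k k = α k and J k (k+1) = J (k+1) k = β (k+1). If x₀ ∈ ℝ satisfies (P n).eval x₀ = 0, then the vector v ∈ ℝⁿ with components v k = (P k).eval x₀ (0 ≤ k < n) is nonzero and satisfies J(n).mulVec v = x₀ • v; hence every root of P n is an eigenvalue of the Jacobi matrix J(n). -/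
/-!
Evaluating the three-term recurrence at `x₀` says, row by row, that
`x₀ v = J v + β n P_n(x₀) e_{n-1}`; at a root of `P n` the boundary term vanishes.
The vector is nonzero because its first entry is the value of the nonzero constant `P 0`.
-/

open Matrix Polynomial

lemma Polynomial.eval_ne_zero_of_natDegree_eq_zero {R : Type*} [Semiring R] {p : R[X]}
    (hdeg : p.natDegree = 0) (hp : p ≠ 0) (x : R) : p.eval x ≠ 0 := by
  rw [eq_C_of_natDegree_eq_zero hdeg] at hp ⊢
  simpa using hp

lemma Finset.sum_range_ite_eq_of_apply_eq_zero {M : Type*} [AddCommMonoid M] {n m : ℕ}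
    (hm : m ≤ n) (g : ℕ → M) (hg : g n = 0) :
    ∑ j ∈ Finset.range n, (if j = m then g j else 0) = g m := by
  rw [Finset.sum_ite_eq']
  split_ifs with h
  · rfl
  · rw [show m = n by simp at h; omega, hg]

def jacobiEntry {R : Type*} [Zero R] (α β : ℕ → R) (i j : ℕ) : R :=
  if i = j then α i else if i + 1 = j then β j else if j + 1 = i then β i else 0

section Jacobi

open Finset

variable {R : Type*} [CommSemiring R]

lemma jacobiEntry_mul_eq (α β p : ℕ → R) (i j : ℕ) :
    jacobiEntry α β i j * p j =
      (if j = i then α j * p j else 0) + (if j = i + 1 then β j * p j else 0) +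
        (if j + 1 = i then β i * p j else 0) := by
  unfold jacobiEntry
  split_ifs <;> first | omega | (subst_vars; simp)

variable {α β : ℕ → R} {x : R} {p : ℕ → R}

lemma sum_range_jacobiEntry_mul_of_recurrence {n : ℕ} (hpn : p n = 0)
    (h0 : x * p 0 = α 0 * p 0 + β 1 * p 1)
    (hsucc : ∀ k, x * p (k + 1) = β (k + 1) * p k + α (k + 1) * p (k + 1) + β (k + 2) * p (k + 2))
    {i : ℕ} (hi : i < n) :
    ∑ j ∈ range n, jacobiEntry α β i j * p j = x * p i := by
  simp_rw [jacobiEntry_mul_eq, sum_add_distrib,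
    sum_range_ite_eq_of_apply_eq_zero hi (fun j => β j * p j) (by simp [hpn]),
    sum_ite_eq', mem_range, if_pos hi]
  rcases i with _ | k
  · simp [h0]
  · simp_rw [Nat.add_right_cancel_iff, sum_ite_eq', mem_range, if_pos (Nat.lt_of_succ_lt hi), hsucc]
    ring

theorem jacobi_mulVec_eq_smul_of_recurrence {n : ℕ} (hpn : p n = 0)
    (h0 : x * p 0 = α 0 * p 0 + β 1 * p 1)
    (hsucc : ∀ k, x * p (k + 1) = β (k + 1) * p k + α (k + 1) * p (k + 1) + β (k + 2) * p (k + 2)) :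
    (Matrix.of fun i j : Fin n => jacobiEntry α β i j) *ᵥ (fun k : Fin n => p k) =
      x • fun k : Fin n => p k := by
  funext i
  simpa [mulVec, dotProduct, Fin.sum_univ_eq_sum_range (fun j => jacobiEntry α β i j * p j)]
    using sum_range_jacobiEntry_mul_of_recurrence hpn h0 hsucc i.isLt

end Jacobi

theorem root_of_orthopoly_is_eigenvalue_of_jacobi
    (n : ℕ) (hn : 1 ≤ n) (α β : ℕ → ℝ) (P : ℕ → Polynomial ℝ)
    (hP0deg : (P 0).natDegree = 0) (hP0ne : P 0 ≠ 0)
    (hrec0 : X * P 0 = C (α 0) * P 0 + C (β 1) * P 1)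
    (hrec : ∀ k, 1 ≤ k →
      X * P k = C (β k) * P (k - 1) + C (α k) * P k + C (β (k + 1)) * P (k + 1))
    (J : Matrix (Fin n) (Fin n) ℝ)
    (hJ : ∀ i j : Fin n, J i j =
      if (i : ℕ) = (j : ℕ) then α i
      else if (i : ℕ) + 1 = (j : ℕ) then β j
      else if (j : ℕ) + 1 = (i : ℕ) then β i
      else 0)
    (x₀ : ℝ) (hx₀ : (P n).eval x₀ = 0)
    (v : Fin n → ℝ) (hv : ∀ k : Fin n, v k = (P (k : ℕ)).eval x₀) :
    v ≠ 0 ∧ J.mulVec v = x₀ • v := by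
  obtain rfl : J = Matrix.of fun i j : Fin n => jacobiEntry α β i j := Matrix.ext hJ
  obtain rfl : v = fun k : Fin n => (P k).eval x₀ := funext hv
  refine ⟨fun hv0 => ?_, ?_⟩
  · exact eval_ne_zero_of_natDegree_eq_zero hP0deg hP0ne x₀ (congrFun hv0 ⟨0, hn⟩)
  · refine jacobi_mulVec_eq_smul_of_recurrence (p := fun k => (P k).eval x₀) hx₀
      (by simpa using congrArg (eval x₀) hrec0) fun k => ?_
    simpa using congrArg (eval x₀) (hrec (k + 1) k.succ_pos)
end

section
/- For every n ≥ 1 the polynomial P n has n distinct real roots: there exist real numbers x_1 < x_2 < … < x_n such that P n = ∏_{i=1}^n (X − C(x_i)). -/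
open Polynomial MeasureTheory Filter

/-!
Let `p = P n` and let `Q` be the product of `X - x` over the real roots `x` of `p` of odd
multiplicity. Then `p * Q` has no sign change, so `∫ p Q w > 0` since `w > 0`. On the other hand
`p` is orthogonal to every polynomial of degree `< n`, because `P 0, …, P (n - 1)` span them.
Hence `deg Q ≥ n`; as `Q ∣ p` and both are monic, `p = Q`, a product of `n` distinct linear
factors.
-/

namespace Polynomial

section Algebra

variable {R M : Type*} [Ring R] [AddCommGroup M] [Module R M]

theorem linearMap_eq_zero_of_degree_lt {P : ℕ → R[X]} (hmonic : ∀ k, (P k).Monic)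
    (hdeg : ∀ k, (P k).natDegree = k) (L : R[X] →ₗ[R] M) :
    ∀ {n : ℕ}, (∀ j < n, L (P j) = 0) → ∀ {Q : R[X]}, Q.degree < n → L Q = 0
  | 0, _, Q, hQ => by
    rw [degree_eq_bot.mp (Nat.WithBot.lt_zero_iff.mp hQ), map_zero]
  | n + 1, hL, Q, hQ => by
    have hR : (Q - C (Q.coeff n) * P n).degree < n := by
      rw [degree_lt_iff_coeff_zero]
      intro m hm
      rw [coeff_sub, coeff_C_mul]
      rcases hm.eq_or_lt with rfl | hm
      · have hlead : (P n).coeff n = 1 := by simpa only [hdeg] using (hmonic n).coeff_natDegree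
        rw [hlead, mul_one, sub_self]
      · rw [coeff_eq_zero_of_degree_lt (hQ.trans_le (by exact_mod_cast hm)),
          coeff_eq_zero_of_natDegree_lt ((hdeg n).trans_lt hm), mul_zero, sub_zero]
    have := linearMap_eq_zero_of_degree_lt hmonic hdeg L (fun j hj => hL j (by omega)) hR
    rwa [map_sub, C_mul', map_smul, hL n n.lt_succ_self, smul_zero, sub_zero] at this

end Algebra

theorem Monic.eval_pos_of_roots_eq_zero {p : ℝ[X]} (hp : p.Monic) (hroots : p.roots = 0)
    (t : ℝ) : 0 < p.eval t := by
  have hne : ∀ x, p.eval x ≠ 0 := fun x hx => by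
    simpa [hroots] using (mem_roots hp.ne_zero).mpr hx
  have hev : ∀ᶠ x in atTop, 0 ≤ p.eval x := by
    rcases Nat.eq_zero_or_pos p.natDegree with hd | hd
    · simp [hp.natDegree_eq_zero.mp hd]
    · exact (tendsto_atTop_of_leadingCoeff_nonneg p (natDegree_pos_iff_degree_pos.mp hd)
        (by simp [hp.leadingCoeff])).eventually_ge_atTop 0
  refine (hne t).symm.lt_of_le (not_lt.mp fun hneg => ?_)
  obtain ⟨x, hx⟩ := intermediate_value_univ₂_eventually₁ p.continuous continuous_const
    hneg.le hev
  exact hne x hx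

section OddRoots

variable {R : Type*} [CommRing R] [IsDomain R] [DecidableEq R]

noncomputable def oddRoots (p : R[X]) : Finset R :=
  p.roots.toFinset.filter fun x => Odd (p.roots.count x)

theorem prod_X_sub_C_oddRoots_dvd (p : R[X]) : ∏ x ∈ p.oddRoots, (X - C x) ∣ p := by
  refine dvd_trans ?_ p.prod_multiset_X_sub_C_dvd
  rw [Finset.prod_eq_multiset_prod]
  refine Multiset.prod_dvd_prod_of_le (Multiset.map_le_map ?_)
  exact (Multiset.le_iff_subset (Finset.nodup _)).mpr fun x hx => by
    simpa [oddRoots] using (Finset.mem_filter.mp hx).1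

theorem natDegree_prod_X_sub_C_oddRoots (p : R[X]) :
    (∏ x ∈ p.oddRoots, (X - C x)).natDegree = p.oddRoots.card := by
  rw [natDegree_prod_of_monic _ _ fun x _ => monic_X_sub_C x]
  simp

end OddRoots

/-- Write `p = (∏ (X - x) ^ mult x) * q` with `q` root-free, hence positive; the extra factor
makes every exponent even. -/
theorem Monic.eval_mul_prod_oddRoots_nonneg {p : ℝ[X]} (hp : p.Monic) (t : ℝ) :
    0 ≤ (p * ∏ x ∈ p.oddRoots, (X - C x)).eval t := by
  obtain ⟨q, hpq, -, hq⟩ := p.exists_prod_multiset_X_sub_C_mul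
  have hq_pos : 0 < q.eval t :=
    ((monic_multisetProd_X_sub_C _).of_mul_monic_left (hpq ▸ hp)).eval_pos_of_roots_eq_zero hq t
  have hp_eval : p.eval t = (∏ x ∈ p.roots.toFinset, (t - x) ^ p.roots.count x) * q.eval t := by
    conv_lhs => rw [← hpq]
    rw [eval_mul, eval_multiset_prod, Multiset.map_map, Finset.prod_multiset_map_count]
    simp
  simp only [eval_mul, eval_prod, eval_sub, eval_X, eval_C]
  rw [hp_eval, oddRoots, Finset.prod_filter, mul_right_comm, ← Finset.prod_mul_distrib]
  refine mul_nonneg (Finset.prod_nonneg fun x _ => ?_) hq_pos.le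
  split_ifs with hodd
  · exact pow_succ (t - x) _ ▸ hodd.add_one.pow_nonneg (t - x)
  · simpa using (Nat.not_odd_iff_even.mp hodd).pow_nonneg (t - x)

section Integral

variable {μ : Measure ℝ} {w : ℝ → ℝ}

theorem integrable_eval_mul (hw : ∀ k : ℕ, Integrable (fun t => t ^ k * w t) μ) (Q : ℝ[X]) :
    Integrable (fun t => Q.eval t * w t) μ := by
  induction Q using Polynomial.induction_on' with
  | add p q hp hq =>
    simp only [eval_add, add_mul]
    exact hp.add hq
  | monomial n a => simpa only [eval_monomial, mul_assoc] using (hw n).const_mul a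

theorem integrable_pow_mul_eval_mul (hw : ∀ k : ℕ, Integrable (fun t => t ^ k * w t) μ)
    (p : ℝ[X]) (k : ℕ) : Integrable (fun t => t ^ k * (p.eval t * w t)) μ := by
  refine (integrable_eval_mul hw (X ^ k * p)).congr (ae_of_all _ fun t => ?_)
  simp only [eval_mul, eval_pow, eval_X, mul_assoc]

variable (μ w) in
@[simps]
noncomputable def weightedIntegral (hw : ∀ k : ℕ, Integrable (fun t => t ^ k * w t) μ) :
    ℝ[X] →ₗ[ℝ] ℝ where
  toFun Q := ∫ t, Q.eval t * w t ∂μ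
  map_add' p q := by
    simp only [eval_add, add_mul]
    exact integral_add (integrable_eval_mul hw p) (integrable_eval_mul hw q)
  map_smul' a p := by
    simp only [eval_smul, smul_eq_mul, mul_assoc, RingHom.id_apply]
    exact integral_const_mul a _

end Integral

end Polynomial

theorem integral_mul_pos_of_continuous {α : Type*} [TopologicalSpace α] [MeasurableSpace α]
    {μ : Measure α} [μ.IsOpenPosMeasure] {f w : α → ℝ} (hf : Continuous f) (hf_nonneg : 0 ≤ f)
    (hf_ne : f ≠ 0) (hw : ∀ x, 0 < w x) (hfw : Integrable (fun x => f x * w x) μ) :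
    0 < ∫ x, f x * w x ∂μ := by
  rw [integral_pos_iff_support_of_nonneg (fun x => mul_nonneg (hf_nonneg x) (hw x).le) hfw]
  obtain ⟨x, hx⟩ := Function.ne_iff.mp hf_ne
  refine (hf.isOpen_support.measure_pos μ ⟨x, hx⟩).trans_le (measure_mono fun y hy => ?_)
  exact mul_ne_zero hy (hw y).ne'

theorem Finset.exists_strictMono_prod_eq {α M : Type*} [LinearOrder α] [CommMonoid M]
    (s : Finset α) {n : ℕ} (hs : s.card = n) (f : α → M) :
    ∃ x : Fin n → α, StrictMono x ∧ ∏ y ∈ s, f y = ∏ i, f (x i) := by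
  refine ⟨s.orderEmbOfFin hs, (s.orderEmbOfFin hs).strictMono, ?_⟩
  conv_lhs => rw [← s.image_orderEmbOfFin_univ hs]
  exact Finset.prod_image fun i _ j _ hij => (s.orderEmbOfFin hs).injective hij

theorem orthopoly_has_distinct_real_roots_general
    (w : ℝ → ℝ) (hw_pos : ∀ x, 0 < w x)
    (hw_int : ∀ k : ℕ, Integrable (fun t => t ^ k * w t))
    (P : ℕ → Polynomial ℝ)
    (hmonic : ∀ k, (P k).Monic) (hdeg : ∀ k, (P k).natDegree = k)
    (horth : ∀ j k, j ≠ k → ∫ t, (P j).eval t * (P k).eval t * w t = 0) :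
    ∀ n, 1 ≤ n → ∃ x : Fin n → ℝ, StrictMono x ∧
      P n = ∏ i : Fin n, (X - C (x i)) := by
  intro n _
  set p := P n
  set Q := ∏ x ∈ p.oddRoots, (X - C x)
  have hQ_monic : Q.Monic := monic_prod_of_monic _ _ fun x _ => monic_X_sub_C x
  have hQ_dvd : Q ∣ p := p.prod_X_sub_C_oddRoots_dvd
  have horth_lower : ∀ {R : ℝ[X]}, R.degree < n → ∫ t, R.eval t * (p.eval t * w t) = 0 :=
    linearMap_eq_zero_of_degree_lt hmonic hdeg
      (weightedIntegral volume _ (integrable_pow_mul_eval_mul hw_int p))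
      fun j hj => by simpa only [weightedIntegral_apply, mul_assoc] using horth j n hj.ne
  have hpQ_ne : (fun t => (p * Q).eval t) ≠ 0 := fun h =>
    ((hmonic n).mul hQ_monic).ne_zero (Polynomial.funext fun t => by simpa using congrFun h t)
  have hpos : 0 < ∫ t, (p * Q).eval t * w t :=
    integral_mul_pos_of_continuous (p * Q).continuous (hmonic n).eval_mul_prod_oddRoots_nonneg
      hpQ_ne hw_pos (integrable_eval_mul hw_int _)
  have hcard_ge : n ≤ p.oddRoots.card := by
    by_contra! hlt
    have hQ_deg : Q.degree < n := degree_le_natDegree.trans_lt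
      (by exact_mod_cast p.natDegree_prod_X_sub_C_oddRoots ▸ hlt)
    exact hpos.ne' (by simpa only [eval_mul, mul_comm, mul_assoc] using horth_lower hQ_deg)
  have hcard_le : p.oddRoots.card ≤ n :=
    p.natDegree_prod_X_sub_C_oddRoots ▸ hdeg n ▸ natDegree_le_of_dvd hQ_dvd (hmonic n).ne_zero
  have hpQ : p = Q := eq_of_monic_of_dvd_of_natDegree_le hQ_monic (hmonic n) hQ_dvd
    (by rw [hdeg n, p.natDegree_prod_X_sub_C_oddRoots]; exact hcard_ge)
  rw [hpQ]
  exact p.oddRoots.exists_strictMono_prod_eq (hcard_le.antisymm hcard_ge) _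

theorem orthopoly_has_distinct_real_roots
    (w : ℝ → ℝ) (hw_cont : Continuous w) (hw_pos : ∀ x, 0 < w x)
    (hw_int : ∀ k : ℕ, Integrable (fun t => t ^ k * w t))
    (P : ℕ → Polynomial ℝ)
    (hmonic : ∀ k, (P k).Monic) (hdeg : ∀ k, (P k).natDegree = k)
    (horth : ∀ j k, j ≠ k → ∫ t, (P j).eval t * (P k).eval t * w t = 0)
    (h : ℕ → ℝ) (hh : ∀ k, h k = ∫ t, ((P k).eval t) ^ 2 * w t) :
    ∀ n, 1 ≤ n → ∃ x : Fin n → ℝ, StrictMono x ∧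
      P n = ∏ i : Fin n, (X - C (x i)) :=
  orthopoly_has_distinct_real_roots_general w hw_pos hw_int P hmonic hdeg horth
end

section
/- Let r ≥ 1, let w : ℝ → ℝ satisfy w x ≥ 0 for all x, let P : Fin r → ℝ[X] be monic polynomials with natDegree (P i) = i, and let h : Fin r → ℝ with h i > 0. Define ψ i x = (h i)^(−1/2) · (P i).eval x · √(w x) and K x y = ∑_{i : Fin r} ψ i x · ψ i y. Then for every x : Fin r → ℝ, det (K (x k) (x l))_{k,l ∈ Fin r} = (∏_i (h i)⁻¹) · (∏_{k < l} (x l − x k))² · ∏_k w (x k). -/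
/-!
Writing `A k i = ψ i (x k)`, the kernel matrix is the Gram matrix `A * Aᵀ`, so its determinant is
`(det A)²`. The matrix `A` is the matrix `(P i)(x k)` scaled by `√(w (x k))` on the rows and by
`h i ^ (-1/2)` on the columns; since the `P i` are monic of degree `i`, column operations reduce
`det ((P i)(x k))` to the Vandermonde determinant.
-/

open Polynomial Matrix Finset Real

theorem Matrix.det_mul_transpose_self {n R : Type*} [Fintype n] [DecidableEq n] [CommRing R]
    (A : Matrix n n R) : (A * Aᵀ).det = A.det ^ 2 := by
  rw [det_mul, det_transpose, sq]

theorem Matrix.det_of_mul_eval_mul_eq_vandermonde {R : Type*} [CommRing R] {n : ℕ}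
    (c u x : Fin n → R) (P : Fin n → R[X]) (hmonic : ∀ i, (P i).Monic)
    (hdeg : ∀ i, (P i).natDegree = i) :
    (Matrix.of fun k i => c i * (P i).eval (x k) * u k).det =
      (∏ k, u k) * ((∏ k, ∏ l ∈ Ioi k, (x l - x k)) * ∏ i, c i) := by
  have hfac : (Matrix.of fun k i => c i * (P i).eval (x k) * u k) =
      diagonal u * ((Matrix.of fun k i => (P i).eval (x k)) * diagonal c) := by
    ext k i
    simp only [diagonal_mul, mul_diagonal, of_apply]
    ring
  rw [hfac, det_mul, det_mul, det_diagonal, det_diagonal,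
    ← det_eval_matrixOfPolynomials_eq_det_vandermonde x P hdeg hmonic, det_vandermonde]

theorem Real.rpow_neg_one_div_two_sq {a : ℝ} (ha : 0 ≤ a) : (a ^ (-(1 : ℝ) / 2)) ^ 2 = a⁻¹ := by
  rw [← rpow_natCast, ← rpow_mul ha]
  norm_num [rpow_neg_one]

theorem Real.prod_sqrt_sq {ι : Type*} (s : Finset ι) {f : ι → ℝ} (hf : ∀ i ∈ s, 0 ≤ f i) :
    (∏ i ∈ s, √(f i)) ^ 2 = ∏ i ∈ s, f i := by
  rw [← prod_pow]
  exact prod_congr rfl fun i hi => sq_sqrt (hf i hi)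

theorem kernel_det_eq_vandermonde_sq_weight_general
    (r : ℕ) (w : ℝ → ℝ) (hw : ∀ x, 0 ≤ w x)
    (P : Fin r → Polynomial ℝ) (hmonic : ∀ i, (P i).Monic)
    (hdeg : ∀ i, (P i).natDegree = (i : ℕ))
    (h : Fin r → ℝ) (hpos : ∀ i, 0 < h i)
    (ψ : Fin r → ℝ → ℝ)
    (hψ : ∀ i x, ψ i x = (h i) ^ (-(1 : ℝ) / 2) * (P i).eval x * Real.sqrt (w x))
    (K : ℝ → ℝ → ℝ) (hK : ∀ x y, K x y = ∑ i, ψ i x * ψ i y) :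
    ∀ x : Fin r → ℝ,
      Matrix.det (Matrix.of fun k l => K (x k) (x l)) =
        (∏ i, (h i)⁻¹) * (∏ k, ∏ l ∈ Finset.Ioi k, (x l - x k)) ^ 2 *
          ∏ k, w (x k) := by
  intro x
  set A : Matrix (Fin r) (Fin r) ℝ := Matrix.of fun k i => ψ i (x k) with hA
  have hgram : (Matrix.of fun k l => K (x k) (x l)) = A * Aᵀ := by
    ext k l
    simp [hK, mul_apply, hA]
  have hψA : A = Matrix.of fun k i => h i ^ (-(1 : ℝ) / 2) * (P i).eval (x k) * √(w (x k)) := by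
    simp only [hA, hψ]
  have hh : ∏ i, (h i)⁻¹ = (∏ i, h i ^ (-(1 : ℝ) / 2)) ^ 2 := by
    rw [← prod_pow]
    exact prod_congr rfl fun i _ => (rpow_neg_one_div_two_sq (hpos i).le).symm
  rw [hgram, det_mul_transpose_self, hψA, det_of_mul_eval_mul_eq_vandermonde _ _ _ P hmonic hdeg,
    hh, ← prod_sqrt_sq _ fun k _ => hw (x k)]
  ring

theorem kernel_det_eq_vandermonde_sq_weight
    (r : ℕ) (hr : 1 ≤ r) (w : ℝ → ℝ) (hw : ∀ x, 0 ≤ w x)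
    (P : Fin r → Polynomial ℝ) (hmonic : ∀ i, (P i).Monic)
    (hdeg : ∀ i, (P i).natDegree = (i : ℕ))
    (h : Fin r → ℝ) (hpos : ∀ i, 0 < h i)
    (ψ : Fin r → ℝ → ℝ)
    (hψ : ∀ i x, ψ i x = (h i) ^ (-(1 : ℝ) / 2) * (P i).eval x * Real.sqrt (w x))
    (K : ℝ → ℝ → ℝ) (hK : ∀ x y, K x y = ∑ i, ψ i x * ψ i y) :
    ∀ x : Fin r → ℝ,
      Matrix.det (Matrix.of fun k l => K (x k) (x l)) =
        (∏ i, (h i)⁻¹) * (∏ k, ∏ l ∈ Finset.Ioi k, (x l - x k)) ^ 2 *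
          ∏ k, w (x k) :=
  kernel_det_eq_vandermonde_sq_weight_general r w hw P hmonic hdeg h hpos ψ hψ K hK
end

section
/- Let m be a natural number and x : Fin m → ℝ. For t ∈ ℝ let x̂ : Fin (m+1) → ℝ be the extension of x with last value t. Then ∫_ℝ det (K (x̂ k) (x̂ l))_{k,l ∈ Fin (m+1)} dt = ((r : ℝ) − m) · det (K (x k) (x l))_{k,l ∈ Fin m}. -/
/-!
Expanding the determinant along the row and column of the new point `t` gives
`K(t,t) · det A - ∑ₖₗ adj(A)ₗₖ K(xₖ,t) K(t,xₗ)`, where `A = (K(xₖ,xₗ))`. Orthonormality gives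
`∫ K(t,t) dt = r` and the reproducing property `∫ K(u,t) K(t,v) dt = K(u,v)`, so the integral is
`r · det A - tr(adj(A) A) = (r - m) · det A`.
-/

open MeasureTheory Matrix

namespace Matrix

variable {R : Type*} [CommRing R]

theorem det_succ_eq_mul_det_sub_sum_adjugate {m : ℕ} (M : Matrix (Fin (m + 1)) (Fin (m + 1)) R) :
    M.det = M 0 0 * (M.submatrix Fin.succ Fin.succ).det -
      ∑ k, ∑ l, (M.submatrix Fin.succ Fin.succ).adjugate l k * (M k.succ 0 * M 0 l.succ) := by
  cases m with
  | zero => simp [det_unique]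
  | succ n =>
    -- Laplace along row 0, then each minor along its column 0; the two cofactor signs
    -- `(-1)^(l+1) (-1)^k` against the adjugate's `(-1)^(k+l)` leave the overall `-1`.
    rw [det_succ_row_zero, Fin.sum_univ_succ, Finset.sum_comm, sub_eq_add_neg,
      ← Finset.sum_neg_distrib]
    congr 1
    · simp
    refine Finset.sum_congr rfl fun l _ => ?_
    rw [det_succ_column_zero, Finset.mul_sum, ← Finset.sum_neg_distrib]
    refine Finset.sum_congr rfl fun k _ => ?_
    have hminor : (M.submatrix Fin.succ l.succ.succAbove).submatrix k.succAbove Fin.succ =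
        (M.submatrix Fin.succ Fin.succ).submatrix k.succAbove l.succAbove := by
      ext i j
      simp [Fin.succ_succAbove_succ]
    rw [adjugate_fin_succ_eq_det_submatrix, hminor]
    simp only [submatrix_apply, Fin.succ_succAbove_zero, Fin.val_succ, pow_add, pow_one]
    ring

theorem sum_sum_adjugate_mul {n : Type*} [Fintype n] [DecidableEq n] (A : Matrix n n R) :
    ∑ k, ∑ l, A.adjugate l k * A k l = Fintype.card n * A.det := by
  rw [Finset.sum_comm]
  simpa [trace, mul_apply, mul_comm] using congrArg trace (adjugate_mul A)

theorem det_of_snoc_eq_det_of_cons {α : Type*} {m : ℕ} (f : α → α → R) (x : Fin m → α)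
    (t : α) :
    det (of fun k l : Fin (m + 1) =>
        f ((Fin.snoc x t : Fin (m + 1) → α) k) ((Fin.snoc x t : Fin (m + 1) → α) l)) =
      det (of fun k l : Fin (m + 1) =>
        f ((Fin.cons t x : Fin (m + 1) → α) k) ((Fin.cons t x : Fin (m + 1) → α) l)) := by
  simp only [Fin.snoc_eq_cons_rotate]
  exact det_submatrix_equiv_self (finRotate (m + 1))
    (of fun k l =>
      f ((Fin.cons t x : Fin (m + 1) → α) k) ((Fin.cons t x : Fin (m + 1) → α) l))

end Matrix

section ProjKernel

variable {α ι : Type*} [Fintype ι]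

/-- The paper's `K_r`: for orthonormal `ψ`, the kernel of the orthogonal projection onto their
span. -/
def projKernel (ψ : ι → α → ℝ) (x y : α) : ℝ := ∑ i, ψ i x * ψ i y

theorem projKernel_mul_projKernel (ψ : ι → α → ℝ) (u v t : α) :
    projKernel ψ u t * projKernel ψ t v = ∑ i, ∑ j, ψ i u * ψ j v * (ψ i t * ψ j t) := by
  simp only [projKernel, Finset.sum_mul_sum]
  exact Finset.sum_congr rfl fun i _ => Finset.sum_congr rfl fun j _ => by ring

variable [MeasurableSpace α] {μ : Measure α} {ψ : ι → α → ℝ}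

theorem integrable_projKernel_diag (hint : ∀ i j, Integrable (fun t => ψ i t * ψ j t) μ) :
    Integrable (fun t => projKernel ψ t t) μ :=
  integrable_finsetSum _ fun i _ => hint i i

theorem integrable_projKernel_mul_projKernel
    (hint : ∀ i j, Integrable (fun t => ψ i t * ψ j t) μ) (u v : α) :
    Integrable (fun t => projKernel ψ u t * projKernel ψ t v) μ := by
  simp_rw [projKernel_mul_projKernel]
  exact integrable_finsetSum _ fun i _ => integrable_finsetSum _ fun j _ => (hint i j).const_mul _

theorem integral_projKernel_diag [DecidableEq ι]
    (hint : ∀ i j, Integrable (fun t => ψ i t * ψ j t) μ)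
    (horth : ∀ i j, ∫ t, ψ i t * ψ j t ∂μ = if i = j then 1 else 0) :
    ∫ t, projKernel ψ t t ∂μ = Fintype.card ι := by
  simp [projKernel, integral_finsetSum _ fun i _ => hint i i, horth]

theorem integral_projKernel_mul_projKernel [DecidableEq ι]
    (hint : ∀ i j, Integrable (fun t => ψ i t * ψ j t) μ)
    (horth : ∀ i j, ∫ t, ψ i t * ψ j t ∂μ = if i = j then 1 else 0) (u v : α) :
    ∫ t, projKernel ψ u t * projKernel ψ t v ∂μ = projKernel ψ u v := by
  simp_rw [projKernel_mul_projKernel]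
  rw [integral_finsetSum _ fun i _ => integrable_finsetSum _ fun j _ => (hint i j).const_mul _]
  simp_rw [integral_finsetSum _ fun j _ => (hint _ j).const_mul _, integral_const_mul, horth]
  simp [projKernel]

end ProjKernel

theorem integral_det_kernel_snoc_general
    (r : ℕ) (ψ : Fin r → ℝ → ℝ)
    (hint : ∀ i j, Integrable (fun t => ψ i t * ψ j t))
    (horth : ∀ i j, ∫ t, ψ i t * ψ j t = if i = j then (1 : ℝ) else 0)
    (K : ℝ → ℝ → ℝ) (hK : ∀ x y, K x y = ∑ i, ψ i x * ψ i y)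
    (m : ℕ) (x : Fin m → ℝ) :
    ∫ t : ℝ,
        Matrix.det (Matrix.of fun k l : Fin (m + 1) =>
          K ((Fin.snoc x t : Fin (m + 1) → ℝ) k) ((Fin.snoc x t : Fin (m + 1) → ℝ) l)) =
      ((r : ℝ) - (m : ℝ)) *
        Matrix.det (Matrix.of fun k l : Fin m => K (x k) (x l)) := by
  obtain rfl : K = projKernel ψ := funext₂ hK
  set A := Matrix.of fun k l : Fin m => projKernel ψ (x k) (x l)
  have hexpand (t : ℝ) : det (of fun k l : Fin (m + 1) =>
      projKernel ψ ((Fin.snoc x t : Fin (m + 1) → ℝ) k) ((Fin.snoc x t : Fin (m + 1) → ℝ) l)) =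
      projKernel ψ t t * A.det -
        ∑ k, ∑ l, A.adjugate l k * (projKernel ψ (x k) t * projKernel ψ t (x l)) := by
    rw [det_of_snoc_eq_det_of_cons, det_succ_eq_mul_det_sub_sum_adjugate]
    rfl
  have hterm (k l : Fin m) :=
    (integrable_projKernel_mul_projKernel hint (x k) (x l)).const_mul (A.adjugate l k)
  have htrace : ∑ k, ∑ l, A.adjugate l k * projKernel ψ (x k) (x l) =
      Fintype.card (Fin m) * A.det := A.sum_sum_adjugate_mul
  simp_rw [hexpand]
  rw [integral_sub ((integrable_projKernel_diag hint).mul_const _)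
      (integrable_finsetSum _ fun k _ => integrable_finsetSum _ fun l _ => hterm k l),
    integral_mul_const, integral_projKernel_diag hint horth,
    integral_finsetSum _ fun k _ => integrable_finsetSum _ fun l _ => hterm k l]
  simp_rw [integral_finsetSum _ fun l _ => hterm _ l, integral_const_mul,
    integral_projKernel_mul_projKernel hint horth, htrace, Fintype.card_fin]
  ring

theorem integral_det_kernel_snoc
    (r : ℕ) (hr : 1 ≤ r) (ψ : Fin r → ℝ → ℝ)
    (hmeas : ∀ i, Measurable (ψ i))
    (hint : ∀ i j, Integrable (fun t => ψ i t * ψ j t))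
    (horth : ∀ i j, ∫ t, ψ i t * ψ j t = if i = j then (1 : ℝ) else 0)
    (K : ℝ → ℝ → ℝ) (hK : ∀ x y, K x y = ∑ i, ψ i x * ψ i y)
    (m : ℕ) (x : Fin m → ℝ) :
    ∫ t : ℝ,
        Matrix.det (Matrix.of fun k l : Fin (m + 1) =>
          K ((Fin.snoc x t : Fin (m + 1) → ℝ) k) ((Fin.snoc x t : Fin (m + 1) → ℝ) l)) =
      ((r : ℝ) - (m : ℝ)) *
        Matrix.det (Matrix.of fun k l : Fin m => K (x k) (x l)) :=
  integral_det_kernel_snoc_general r ψ hint horth K hK m x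
end

section
/- Let m ≤ r and x : Fin m → ℝ. Then the integral over y : Fin (r−m) → ℝ, with respect to (r−m)-dimensional Lebesgue measure, of det (K (z k) (z l))_{k,l ∈ Fin r} — where z : Fin r → ℝ is the concatenation of x and y — equals (r − m)! · det (K (x k) (x l))_{k,l ∈ Fin m}. Equivalently, the m-point correlation function R_{m,r}(x_1,…,x_m) = (r!/(r−m)!) ∫_{ℝ^{r−m}} (1/r!) det(K(z_k,z_l))_{r×r} dx_{m+1}…dx_r equals det(K(x_k, x_ℓ))_{k,ℓ=1}^m. -/
/-!
The kernel matrix at `z` is the Gram matrix `Φᵀ * Φ` of `Φ i s = ψ i (z s)`, so its determinant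
is `∑ σ τ, sign σ * sign τ * ∏ s, ψ (σ s) (z s) * ψ (τ s) (z s)`. Integrating out the last
`r - m` coordinates, orthonormality keeps exactly the pairs with `σ = τ` on those positions, i.e.
`τ = σ * sumCongr ρ 1` with `ρ` a permutation of the first `m` positions. The sum over `ρ` is
`(∏ₖ A (f k) k) * det (A.submatrix f id)` for `A i k = ψ i (x k)`, where `f` is the restriction of
`σ` to the first `m` positions. Every injection `f` arises from `(r - m)!` permutations `σ` and
the non-injective `f` give a repeated row, so the total is `(r - m)!` times the unsummed
Cauchy–Binet expansion of `det (Aᵀ * A) = det (K (x k) (x l))`.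
-/

open MeasureTheory Matrix Function

namespace Equiv.Perm

variable {α n : Type*} [Fintype α] [Fintype n] [DecidableEq n]

theorem card_comp_eq_of_injective {g f : α → n} (hg : Injective g) (hf : Injective f) :
    Fintype.card {σ : Perm n // ⇑σ ∘ g = f} = (Fintype.card n - Fintype.card α).factorial := by
  obtain ⟨σ₀, hσ₀⟩ := exists_extending_pair g f hg hf
  have hfix : {σ : Perm n // ⇑σ ∘ g = f} ≃ {σ : Perm n // ∀ x, ¬x ∉ Set.range g → σ x = x} :=
    { toFun := fun σ => ⟨σ₀⁻¹ * σ, by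
        rintro _ hx
        obtain ⟨a, rfl⟩ := not_not.mp hx
        simpa [Equiv.symm_apply_eq, hσ₀] using congrFun σ.2 a⟩
      invFun := fun σ => ⟨σ₀ * σ, funext fun a => by
        simp [σ.2 (g a) (not_not.mpr ⟨a, rfl⟩), hσ₀]⟩
      left_inv := fun σ => by simp
      right_inv := fun σ => by simp }
  rw [Fintype.card_congr (hfix.trans (Perm.subtypeEquivSubtypePerm _).symm), Fintype.card_perm,
    Fintype.card_subtype_compl (· ∈ Set.range g), Set.card_range_of_injective hg]

theorem sum_comp_eq_factorial_smul_sum [DecidableEq α] {M : Type*} [AddCommMonoid M]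
    {g : α → n} (hg : Injective g) (G : (α → n) → M) (hG : ∀ f, ¬Injective f → G f = 0) :
    ∑ σ : Perm n, G (⇑σ ∘ g) = (Fintype.card n - Fintype.card α).factorial • ∑ f, G f := by
  rw [← Finset.sum_fiberwise Finset.univ (fun σ : Perm n => ⇑σ ∘ g), Finset.smul_sum]
  refine Finset.sum_congr rfl fun f _ => ?_
  rw [Finset.sum_congr rfl fun σ hσ => congrArg G (Finset.mem_filter.1 hσ).2, Finset.sum_const]
  by_cases hf : Injective f
  · rw [← Fintype.card_subtype, card_comp_eq_of_injective hg hf]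
  · simp [hG f hf]

theorem forall_apply_inr_eq_iff {α β : Type*} [Finite α] [Finite β] (w : Perm (α ⊕ β)) :
    (∀ b, w (.inr b) = .inr b) ↔ ∃ ρ : Perm α, sumCongr ρ (Equiv.refl β) = w := by
  refine ⟨fun hw => ?_, by rintro ⟨ρ, rfl⟩ b; rfl⟩
  have hmaps : Set.MapsTo w (Set.range .inl) (Set.range .inl) := by
    rintro _ ⟨a, rfl⟩
    cases h : w (.inl a) with
    | inl a' => exact ⟨a', rfl⟩
    | inr b => exact absurd (w.injective (h.trans (hw b).symm)) Sum.inl_ne_inr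
  obtain ⟨⟨ρ, μ⟩, rfl⟩ := mem_sumCongrHom_range_of_perm_mapsTo_inl hmaps
  refine ⟨ρ, congrArg (sumCongr ρ) (Equiv.ext fun b => ?_)⟩
  simpa using (hw b).symm

theorem sum_filter_apply_inr_eq {α β M : Type*} [Fintype α] [Fintype β] [DecidableEq α]
    [DecidableEq β] [AddCommMonoid M] (σ : Perm (α ⊕ β)) (F : Perm (α ⊕ β) → M) :
    ∑ τ with ∀ b, τ (.inr b) = σ (.inr b), F τ =
      ∑ ρ : Perm α, F (σ * sumCongr ρ (Equiv.refl β)) := by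
  have hinj : Injective fun ρ : Perm α => σ * sumCongr ρ (Equiv.refl β) := fun ρ ρ' h =>
    Equiv.ext fun a => by simpa using congr($h (.inl a))
  rw [← Finset.sum_image fun ρ _ ρ' _ h => hinj h]
  congr 1
  ext τ
  simp only [Finset.mem_filter, Finset.mem_univ, true_and, Finset.mem_image]
  simp_rw [← eq_inv_mul_iff_mul_eq, ← forall_apply_inr_eq_iff, Perm.mul_apply,
    Perm.inv_eq_iff_eq]

end Equiv.Perm

namespace Matrix

open Equiv

variable {R α β n : Type*} [CommRing R] [Fintype α] [Fintype β] [Fintype n] [DecidableEq α]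

theorem of_sum_mul_eq_transpose_mul {ι p Ω : Type*} [Fintype ι] (ψ : ι → Ω → R) (z : p → Ω) :
    (of fun s t => ∑ i, ψ i (z s) * ψ i (z t)) =
      (of fun i s => ψ i (z s))ᵀ * of fun i s => ψ i (z s) := by
  ext s t
  simp [mul_apply]

theorem det_mul_eq_sum_prod_mul_det_submatrix (M : Matrix α n R) (N : Matrix n α R) :
    det (M * N) = ∑ f : α → n, (∏ a, M a (f a)) * det (N.submatrix f id) := by
  rw [← det_transpose, det_apply]
  simp_rw [transpose_apply, mul_apply, Fintype.prod_sum, Finset.smul_sum]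
  rw [Finset.sum_comm]
  refine Finset.sum_congr rfl fun f _ => ?_
  rw [← det_transpose (N.submatrix f id), det_apply, Finset.mul_sum]
  refine Finset.sum_congr rfl fun ρ _ => ?_
  simp [Finset.prod_mul_distrib, mul_smul_comm]

theorem det_transpose_mul_self [DecidableEq n] (Φ : Matrix n n R) :
    det (Φᵀ * Φ) = ∑ σ : Perm n, ∑ τ : Perm n,
      (Perm.sign σ * Perm.sign τ) • ∏ s, Φ (σ s) s * Φ (τ s) s := by
  rw [det_mul, det_transpose, det_apply, Finset.sum_mul_sum]
  simp_rw [smul_mul_smul_comm, Finset.prod_mul_distrib]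

theorem sum_perm_prod_mul_det_submatrix_comp [DecidableEq n] (A : Matrix n α R) {g : α → n}
    (hg : Injective g) :
    ∑ σ : Perm n, (∏ a, A (σ (g a)) a) * det (A.submatrix (σ ∘ g) id) =
      (Fintype.card n - Fintype.card α).factorial * det (Aᵀ * A) := by
  rw [det_mul_eq_sum_prod_mul_det_submatrix, ← nsmul_eq_mul]
  refine Perm.sum_comp_eq_factorial_smul_sum hg
    (fun f => (∏ a, Aᵀ a (f a)) * det (A.submatrix f id)) fun f hf => ?_
  obtain ⟨a, a', h, hne⟩ := not_injective_iff.1 hf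
  rw [det_zero_of_row_eq hne (funext fun _ => by simp [h]), mul_zero]

theorem sum_sign_smul_prod_mul_prod_ite_eq [DecidableEq β] (A : Matrix (α ⊕ β) α R) :
    ∑ σ : Perm (α ⊕ β), ∑ τ : Perm (α ⊕ β),
        ((Perm.sign σ * Perm.sign τ) • ∏ a, A (σ (.inl a)) a * A (τ (.inl a)) a) *
          ∏ b, (if σ (.inr b) = τ (.inr b) then 1 else 0) =
      (Fintype.card β).factorial * det (Aᵀ * A) := by
  calc _ = ∑ σ : Perm (α ⊕ β), ∑ τ with ∀ b, τ (.inr b) = σ (.inr b),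
        (Perm.sign σ * Perm.sign τ) • ∏ a, A (σ (.inl a)) a * A (τ (.inl a)) a := by
        simp_rw [Finset.prod_boole, Finset.sum_filter, Finset.mem_univ, true_imp_iff, mul_ite,
          mul_one, mul_zero, eq_comm]
    _ = ∑ σ : Perm (α ⊕ β), ∑ ρ : Perm α,
        Perm.sign ρ • ∏ a, A (σ (.inl a)) a * A (σ (.inl (ρ a))) a := by
        simp_rw [Perm.sum_filter_apply_inr_eq]
        simp [Perm.sign_mul, Perm.sign_sumCongr, ← mul_assoc, Int.units_mul_self]
    _ = ∑ σ : Perm (α ⊕ β), (∏ a, A (σ (.inl a)) a) * det (A.submatrix (σ ∘ .inl) id) := by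
        simp_rw [det_apply, Finset.mul_sum, mul_smul_comm, Finset.prod_mul_distrib]
        rfl
    _ = _ := by
        rw [sum_perm_prod_mul_det_submatrix_comp A Sum.inl_injective, Fintype.card_sum,
          Nat.add_sub_cancel_left]

end Matrix

open Equiv in
/-- The family is indexed by the positions `α ⊕ β` so that the matrix `ψ i (z s)` is square. -/
theorem integral_det_of_sum_mul_sum_elim {Ω α β : Type*} [MeasurableSpace Ω] {μ : Measure Ω}
    [SigmaFinite μ] [Fintype α] [Fintype β] [DecidableEq α] [DecidableEq β]
    (ψ : α ⊕ β → Ω → ℝ) (hint : ∀ i j, Integrable (fun t => ψ i t * ψ j t) μ)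
    (horth : ∀ i j, ∫ t, ψ i t * ψ j t ∂μ = if i = j then 1 else 0) (x : α → Ω) :
    ∫ y : β → Ω, det (of fun s t => ∑ i, ψ i (Sum.elim x y s) * ψ i (Sum.elim x y t))
        ∂(Measure.pi fun _ => μ) =
      (Fintype.card β).factorial * det (of fun a a' => ∑ i, ψ i (x a) * ψ i (x a')) := by
  set c : Perm (α ⊕ β) → Perm (α ⊕ β) → ℝ := fun σ τ =>
    (Perm.sign σ * Perm.sign τ) • ∏ a, ψ (σ (.inl a)) (x a) * ψ (τ (.inl a)) (x a)
  have hexp : ∀ y : β → Ω,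
      det (of fun s t => ∑ i, ψ i (Sum.elim x y s) * ψ i (Sum.elim x y t)) =
        ∑ σ, ∑ τ, c σ τ * ∏ b, ψ (σ (.inr b)) (y b) * ψ (τ (.inr b)) (y b) := fun y => by
    rw [of_sum_mul_eq_transpose_mul, det_transpose_mul_self]
    simp only [Fintype.prod_sum_type, of_apply, Sum.elim_inl, Sum.elim_inr, smul_mul_assoc, c]
  have hterm : ∀ σ τ : Perm (α ⊕ β), Integrable
      (fun y : β → Ω => c σ τ * ∏ b, ψ (σ (.inr b)) (y b) * ψ (τ (.inr b)) (y b))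
      (Measure.pi fun _ => μ) := fun σ τ =>
    (Integrable.fintype_prod fun b => hint _ _).const_mul _
  calc _ = ∑ σ, ∑ τ, c σ τ * ∏ b, ∫ t, ψ (σ (.inr b)) t * ψ (τ (.inr b)) t ∂μ := by
        simp_rw [hexp]
        rw [integral_finsetSum _ fun σ _ => integrable_finsetSum _ fun τ _ => hterm σ τ]
        refine Finset.sum_congr rfl fun σ _ => ?_
        rw [integral_finsetSum _ fun τ _ => hterm σ τ]
        refine Finset.sum_congr rfl fun τ _ => ?_
        rw [integral_const_mul,
          integral_fintype_prod_eq_prod fun b t => ψ (σ (.inr b)) t * ψ (τ (.inr b)) t]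
    _ = _ := by
        simp_rw [horth, c]
        rw [of_sum_mul_eq_transpose_mul]
        exact sum_sign_smul_prod_mul_prod_ite_eq (of fun i a => ψ i (x a))

theorem dyson_determinantal_formula_general
    (r : ℕ) (ψ : Fin r → ℝ → ℝ)
    (hint : ∀ i j, Integrable (fun t => ψ i t * ψ j t))
    (horth : ∀ i j, ∫ t, ψ i t * ψ j t = if i = j then (1 : ℝ) else 0)
    (K : ℝ → ℝ → ℝ) (hK : ∀ x y, K x y = ∑ i, ψ i x * ψ i y)
    (m : ℕ) (hm : m ≤ r) (x : Fin m → ℝ) :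
    (∫ y : Fin (r - m) → ℝ,
        Matrix.det (Matrix.of fun k l : Fin r =>
          K ((Fin.append x y : Fin (m + (r - m)) → ℝ)
                (Fin.cast (Nat.add_sub_cancel' hm).symm k))
            ((Fin.append x y : Fin (m + (r - m)) → ℝ)
                (Fin.cast (Nat.add_sub_cancel' hm).symm l)))) =
      ((r - m).factorial : ℝ) *
        Matrix.det (Matrix.of fun k l : Fin m => K (x k) (x l)) := by
  set e : Fin m ⊕ Fin (r - m) ≃ Fin r := finSumFinEquiv.trans (finCongr (Nat.add_sub_cancel' hm))
  have hKe : ∀ a b, K a b = ∑ s, ψ (e s) a * ψ (e s) b := fun a b =>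
    (hK a b).trans (e.sum_comp fun i => ψ i a * ψ i b).symm
  have hdet : ∀ y : Fin (r - m) → ℝ,
      det (of fun k l : Fin r =>
          K ((Fin.append x y : Fin (m + (r - m)) → ℝ) (Fin.cast (Nat.add_sub_cancel' hm).symm k))
            ((Fin.append x y : Fin (m + (r - m)) → ℝ) (Fin.cast (Nat.add_sub_cancel' hm).symm l))) =
        det (of fun s t => ∑ i, ψ (e i) (Sum.elim x y s) * ψ (e i) (Sum.elim x y t)) := fun y => by
    rw [← det_submatrix_equiv_self e]
    congr 1
    ext (a | b) (a' | b') <;> simp [e, hKe]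
  simp_rw [hdet, hKe]
  have h := integral_det_of_sum_mul_sum_elim (μ := volume) (fun s => ψ (e s))
    (fun _ _ => hint _ _) (fun _ _ => by simp [horth, e.injective.eq_iff]) x
  rwa [Fintype.card_fin] at h

theorem dyson_determinantal_formula
    (r : ℕ) (hr : 1 ≤ r) (ψ : Fin r → ℝ → ℝ)
    (hmeas : ∀ i, Measurable (ψ i))
    (hint : ∀ i j, Integrable (fun t => ψ i t * ψ j t))
    (horth : ∀ i j, ∫ t, ψ i t * ψ j t = if i = j then (1 : ℝ) else 0)
    (K : ℝ → ℝ → ℝ) (hK : ∀ x y, K x y = ∑ i, ψ i x * ψ i y)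
    (m : ℕ) (hm : m ≤ r) (x : Fin m → ℝ) :
    (∫ y : Fin (r - m) → ℝ,
        Matrix.det (Matrix.of fun k l : Fin r =>
          K ((Fin.append x y : Fin (m + (r - m)) → ℝ)
                (Fin.cast (Nat.add_sub_cancel' hm).symm k))
            ((Fin.append x y : Fin (m + (r - m)) → ℝ)
                (Fin.cast (Nat.add_sub_cancel' hm).symm l)))) =
      ((r - m).factorial : ℝ) *
        Matrix.det (Matrix.of fun k l : Fin m => K (x k) (x l)) :=
  dyson_determinantal_formula_general r ψ hint horth K hK m hm x
end

section
/- Let r ≥ 1 and let f, g : Fin r → ℝ → ℝ be measurable functions such that for all i, j the product t ↦ f i t · g j t is Lebesgue-integrable on ℝ. Then ∫_{ℝ^r} det (f i (x j))_{i,j ∈ Fin r} · det (g i (x j))_{i,j ∈ Fin r} dx = r! · det (∫_ℝ f i t · g j t dt)_{i,j ∈ Fin r}. -/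
/-!
Expand both determinants by the Leibniz formula. Each term of the double sum over permutations
`σ, τ` is a product of functions of one coordinate each, so Fubini turns its integral into
`∏ j, A (σ j) (τ j)` with `A i j = ∫ f i * g j`. For fixed `σ` the sum over `τ` is the
determinant of `A` with its rows permuted by `σ`, i.e. `sign σ * det A`; the signs then cancel
and each of the `r!` permutations `σ` contributes `det A`.
-/

open MeasureTheory Matrix Equiv

namespace Matrix

variable {ι R : Type*} [Fintype ι] [DecidableEq ι] [CommRing R]

theorem sum_perm_sign_mul_prod_apply_perm (A : Matrix ι ι R) (σ : Perm ι) :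
    ∑ τ : Perm ι, (Perm.sign τ : R) * ∏ j, A (σ j) (τ j) = Perm.sign σ * A.det := by
  rw [← det_permute, ← det_transpose, det_apply']
  rfl

theorem det_mul_det_eq_sum_perm_sum_perm (M N : Matrix ι ι R) :
    M.det * N.det = ∑ σ : Perm ι, ∑ τ : Perm ι,
      (Perm.sign σ : R) * Perm.sign τ * ∏ j, M (σ j) j * N (τ j) j := by
  simp only [det_apply', Finset.sum_mul_sum, Finset.prod_mul_distrib]
  refine Fintype.sum_congr _ _ fun σ => Fintype.sum_congr _ _ fun τ => ?_
  ring

theorem sum_perm_sum_perm_sign_mul_sign_mul_prod (A : Matrix ι ι R) :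
    ∑ σ : Perm ι, ∑ τ : Perm ι, (Perm.sign σ : R) * Perm.sign τ * ∏ j, A (σ j) (τ j) =
      (Fintype.card ι).factorial * A.det := by
  calc _ = ∑ σ : Perm ι, (Perm.sign σ : R) * (Perm.sign σ * A.det) := by
          simp only [mul_assoc, ← Finset.mul_sum, sum_perm_sign_mul_prod_apply_perm]
    _ = ∑ _σ : Perm ι, A.det := by
          refine Fintype.sum_congr _ _ fun σ => ?_
          rw [← mul_assoc, ← Int.cast_mul, ← Units.val_mul, Int.units_mul_self, Units.val_one,
            Int.cast_one, one_mul]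
    _ = _ := by simp [Fintype.card_perm]

end Matrix

theorem integral_det_mul_det {ι α 𝕜 : Type*} [Fintype ι] [DecidableEq ι] [RCLike 𝕜]
    [MeasurableSpace α] (μ : Measure α) [SigmaFinite μ] (f g : ι → α → 𝕜)
    (hint : ∀ i j, Integrable (fun t => f i t * g j t) μ) :
    ∫ x, det (of fun i j => f i (x j)) * det (of fun i j => g i (x j)) ∂(Measure.pi fun _ => μ) =
      ((Fintype.card ι).factorial : 𝕜) * det (of fun i j => ∫ t, f i t * g j t ∂μ) := by
  have hterm (σ τ : Perm ι) :
      Integrable (fun x : ι → α => ∏ j, f (σ j) (x j) * g (τ j) (x j)) (Measure.pi fun _ => μ) :=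
    Integrable.fintype_prod fun j => hint (σ j) (τ j)
  simp only [det_mul_det_eq_sum_perm_sum_perm, of_apply]
  rw [integral_finsetSum _ fun σ _ => integrable_finsetSum _ fun τ _ => (hterm σ τ).const_mul _,
    ← sum_perm_sum_perm_sign_mul_sign_mul_prod]
  refine Fintype.sum_congr _ _ fun σ => ?_
  rw [integral_finsetSum _ fun τ _ => (hterm σ τ).const_mul _]
  refine Fintype.sum_congr _ _ fun τ => ?_
  rw [integral_const_mul, integral_fintype_prod_eq_prod fun j t => f (σ j) t * g (τ j) t]
  rfl

theorem andreief_identity_general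
    (r : ℕ) (f g : Fin r → ℝ → ℝ)
    (hint : ∀ i j, Integrable (fun t => f i t * g j t)) :
    ∫ x : Fin r → ℝ,
        Matrix.det (Matrix.of fun i j => f i (x j)) *
          Matrix.det (Matrix.of fun i j => g i (x j)) =
      (r.factorial : ℝ) * Matrix.det (Matrix.of fun i j => ∫ t, f i t * g j t) := by
  simpa [volume_pi] using integral_det_mul_det volume f g hint

theorem andreief_identity
    (r : ℕ) (hr : 1 ≤ r) (f g : Fin r → ℝ → ℝ)
    (hf : ∀ i, Measurable (f i)) (hg : ∀ i, Measurable (g i))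
    (hint : ∀ i j, Integrable (fun t => f i t * g j t)) :
    ∫ x : Fin r → ℝ,
        Matrix.det (Matrix.of fun i j => f i (x j)) *
          Matrix.det (Matrix.of fun i j => g i (x j)) =
      (r.factorial : ℝ) * Matrix.det (Matrix.of fun i j => ∫ t, f i t * g j t) :=
  andreief_identity_general r f g hint
end
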